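/- arXiv:2305.18564 — 2 statements merged into one kernel-verified Lean document; each statement's English description precedes it below -/
import Mathlib

section
/- Let μ : [0,∞) → ℝ be continuously differentiable with μ(s) ≥ ε₁ > 0 and μ(s) + 2sμ'(s) ≥ ε₂ > 0 for all s ≥ 0. Set ε = min{ε₁, ε₂}. Then for any n×n real matrices D and E (with D ≠ 0), μ(|D|²)|E|² + 2μ'(|D|²)|D|² · ⟨E, D/|D|⟩² ≥ ε|E|², where |·| is the Frobenius norm and ⟨·,·⟩ the Frobenius inner product; the inequality also holds with the convention that the second term is 0 when D = 0. -/
open scoped Classical BigOperators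

/-- Frobenius inner product of square real matrices. -/
noncomputable def ipF {n : ℕ} (A B : Matrix (Fin n) (Fin n) ℝ) : ℝ :=
  ∑ i, ∑ j, A i j * B i j

/-- Frobenius norm of a square real matrix. -/
noncomputable def nF {n : ℕ} (A : Matrix (Fin n) (Fin n) ℝ) : ℝ :=
  Real.sqrt (ipF A A)

lemma ipF_self_nonneg {n : ℕ} (A : Matrix (Fin n) (Fin n) ℝ) : 0 ≤ ipF A A :=
  Finset.sum_nonneg fun i _ => Finset.sum_nonneg fun j _ => mul_self_nonneg _

lemma nF_sq {n : ℕ} (A : Matrix (Fin n) (Fin n) ℝ) : (nF A) ^ 2 = ipF A A := by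
  rw [nF, Real.sq_sqrt (ipF_self_nonneg A)]

lemma ipF_self_pos {n : ℕ} {A : Matrix (Fin n) (Fin n) ℝ} (h : A ≠ 0) : 0 < ipF A A := by
  rcases (ipF_self_nonneg A).lt_or_eq with h' | h'
  · exact h'
  · exfalso; apply h
    ext i j
    have h0 : ∀ i ∈ Finset.univ, (0:ℝ) ≤ ∑ j, A i j * A i j :=
      fun i _ => Finset.sum_nonneg fun j _ => mul_self_nonneg _
    have := (Finset.sum_eq_zero_iff_of_nonneg h0).mp h'.symm i (Finset.mem_univ i)
    have := (Finset.sum_eq_zero_iff_of_nonneg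
      (fun j _ => mul_self_nonneg (A i j))).mp this j (Finset.mem_univ j)
    simpa [mul_self_eq_zero] using this

lemma ipF_smul {n : ℕ} (c : ℝ) (A B : Matrix (Fin n) (Fin n) ℝ) :
    ipF A (c • B) = c * ipF A B := by
  simp only [ipF, Finset.mul_sum, Matrix.smul_apply, smul_eq_mul]
  congr 1; ext i; congr 1; ext j; ring

lemma ipF_cs {n : ℕ} (A B : Matrix (Fin n) (Fin n) ℝ) :
    (ipF A B) ^ 2 ≤ ipF A A * ipF B B := by
  have h : ∀ C D : Matrix (Fin n) (Fin n) ℝ,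
      ipF C D = ∑ p : Fin n × Fin n, C p.1 p.2 * D p.1 p.2 := by
    intro C D; rw [ipF, ← Finset.sum_product']; rfl
  rw [h, h, h]
  have := Finset.sum_mul_sq_le_sq_mul_sq Finset.univ
    (fun p : Fin n × Fin n => A p.1 p.2) (fun p => B p.1 p.2)
  simpa [sq] using this


/-- Pointwise coercivity: `μ(|D|²)|E|² + 2μ'(|D|²)|D|²⟨E, D/|D|⟩² ≥ ε|E|²`,
with the convention that the second term is `0` when `D = 0`. -/
theorem pointwise_coercivity (n : ℕ) (μ μ' : ℝ → ℝ) (ε₁ ε₂ : ℝ)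
    (hε₁ : 0 < ε₁) (hε₂ : 0 < ε₂)
    (hder : ∀ s, 0 ≤ s → HasDerivAt μ (μ' s) s)
    (h1 : ∀ s, 0 ≤ s → ε₁ ≤ μ s)
    (h2 : ∀ s, 0 ≤ s → ε₂ ≤ μ s + 2 * s * μ' s)
    (D E : Matrix (Fin n) (Fin n) ℝ) :
    min ε₁ ε₂ * (nF E) ^ 2 ≤
      μ ((nF D) ^ 2) * (nF E) ^ 2 +
        (if D = 0 then 0
         else 2 * μ' ((nF D) ^ 2) * (nF D) ^ 2 * (ipF E ((nF D)⁻¹ • D)) ^ 2) := by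
  have hE2 : (0:ℝ) ≤ (nF E) ^ 2 := sq_nonneg _
  have hs0 : (0:ℝ) ≤ (nF D) ^ 2 := sq_nonneg _
  have hμ1 : ε₁ ≤ μ ((nF D)^2) := h1 _ hs0
  have hmin1 : min ε₁ ε₂ ≤ ε₁ := min_le_left _ _
  by_cases hD : D = 0
  · simp only [hD, if_true, add_zero]
    calc min ε₁ ε₂ * (nF E)^2 ≤ ε₁ * (nF E)^2 := by nlinarith
      _ ≤ _ := by nlinarith [h1 _ (sq_nonneg (nF (0 : Matrix (Fin n) (Fin n) ℝ)))]
  · simp only [hD, if_false]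
    rcases le_or_gt 0 (μ' ((nF D)^2)) with hp | hp
    · have : 0 ≤ 2 * μ' ((nF D)^2) * (nF D)^2 * (ipF E ((nF D)⁻¹ • D))^2 := by positivity
      nlinarith
    · -- Cauchy-Schwarz step
      have hDD : 0 < ipF D D := ipF_self_pos hD
      have hnD : 0 < nF D := Real.sqrt_pos.mpr hDD
      have hcs : (ipF E D)^2 ≤ ipF E E * ipF D D := ipF_cs E D
      have hip : ipF E ((nF D)⁻¹ • D) = (nF D)⁻¹ * ipF E D := ipF_smul _ _ _
      have hsq : (nF D)^2 = ipF D D := nF_sq D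
      have hEsq : (nF E)^2 = ipF E E := nF_sq E
      have ht : (ipF E ((nF D)⁻¹ • D))^2 ≤ (nF E)^2 := by
        rw [hip, mul_pow, hEsq]
        have h2' : ((nF D)⁻¹)^2 = (ipF D D)⁻¹ := by
          rw [← hsq]; field_simp
        rw [h2']
        rw [inv_mul_le_iff₀ hDD]
        nlinarith
      have hkey : 2 * μ' ((nF D)^2) * (nF D)^2 * (nF E)^2 ≤
          2 * μ' ((nF D)^2) * (nF D)^2 * (ipF E ((nF D)⁻¹ • D))^2 := by
        have hc : 2 * μ' ((nF D)^2) * (nF D)^2 ≤ 0 := by nlinarith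
        nlinarith [sq_nonneg (ipF E ((nF D)⁻¹ • D))]
      have h2' := h2 _ hs0
      have hmin2 : min ε₁ ε₂ ≤ ε₂ := min_le_right _ _
      nlinarith
end

section
/- Let μ : [0,∞) → ℝ be continuously differentiable with μ(s) ≥ ε₁ > 0 and μ(s) + 2sμ'(s) ≥ ε₂ > 0 for all s ≥ 0, and set ε = min{ε₁, ε₂}. Then for all n×n real matrices A, B: ⟨μ(|A|²)A - μ(|B|²)B, A - B⟩ ≥ ε|A - B|², where ⟨·,·⟩ and |·| are the Frobenius inner product and norm. -/
open BigOperators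

/-!
Along the segment `D t = B + t (A - B)` the function `f t = μ(|D t|²) ⟨D t, A - B⟩` has
`f 1 - f 0 = ⟨μ(|A|²)A - μ(|B|²)B, A - B⟩` and derivative
`μ(|D|²)|E|² + 2μ'(|D|²)⟨D,E⟩²` with `E = A - B`. This is at least `ε₁|E|²` when `μ' ≥ 0`, and,
by Cauchy–Schwarz `⟨D,E⟩² ≤ |D|²|E|²`, at least `(μ(s) + 2sμ'(s))|E|² ≥ ε₂|E|²` with `s = |D|²`
when `μ' < 0`. The mean value inequality concludes.
-/

open RealInnerProductSpace

section InnerProductSpace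

variable {E : Type*} [NormedAddCommGroup E] [InnerProductSpace ℝ E] {μ μ' : ℝ → ℝ} {ε₁ ε₂ : ℝ}

theorem min_mul_norm_sq_le_of_coercive (h1 : ∀ s, 0 ≤ s → ε₁ ≤ μ s)
    (h2 : ∀ s, 0 ≤ s → ε₂ ≤ μ s + 2 * s * μ' s) (d e : E) :
    min ε₁ ε₂ * ‖e‖ ^ 2 ≤ μ (‖d‖ ^ 2) * ‖e‖ ^ 2 + 2 * μ' (‖d‖ ^ 2) * ⟪d, e⟫ ^ 2 := by
  have hs : 0 ≤ ‖d‖ ^ 2 := by positivity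
  rcases le_or_gt 0 (μ' (‖d‖ ^ 2)) with hμ' | hμ'
  · calc min ε₁ ε₂ * ‖e‖ ^ 2 ≤ μ (‖d‖ ^ 2) * ‖e‖ ^ 2 := by
          gcongr; exact (min_le_left _ _).trans (h1 _ hs)
      _ ≤ _ := le_add_of_nonneg_right (by positivity)
  · have hcs : ⟪d, e⟫ ^ 2 ≤ ‖d‖ ^ 2 * ‖e‖ ^ 2 := by
      rw [← mul_pow, ← sq_abs]
      exact pow_le_pow_left₀ (abs_nonneg _) (abs_real_inner_le_norm d e) 2
    calc min ε₁ ε₂ * ‖e‖ ^ 2 ≤ (μ (‖d‖ ^ 2) + 2 * ‖d‖ ^ 2 * μ' (‖d‖ ^ 2)) * ‖e‖ ^ 2 := by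
          gcongr; exact (min_le_right _ _).trans (h2 _ hs)
      _ ≤ _ := by nlinarith

theorem hasDerivAt_mul_inner_along_line (hder : ∀ s, 0 ≤ s → HasDerivAt μ (μ' s) s)
    (b e : E) (t : ℝ) :
    HasDerivAt (fun t : ℝ => μ (‖b + t • e‖ ^ 2) * ⟪b + t • e, e⟫)
      (μ (‖b + t • e‖ ^ 2) * ‖e‖ ^ 2 + 2 * μ' (‖b + t • e‖ ^ 2) * ⟪b + t • e, e⟫ ^ 2) t := by
  have hline : HasDerivAt (fun t : ℝ => b + t • e) e t := by
    simpa using ((hasDerivAt_id t).smul_const e).const_add b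
  have hμ := (hder _ (by positivity)).comp t hline.norm_sq
  have hinner := hline.inner ℝ (hasDerivAt_const t e)
  refine (hμ.mul hinner).congr_deriv ?_
  rw [inner_zero_right, zero_add, real_inner_self_eq_norm_sq, Function.comp_apply]
  ring

theorem min_mul_norm_sub_sq_le_inner (hder : ∀ s, 0 ≤ s → HasDerivAt μ (μ' s) s)
    (h1 : ∀ s, 0 ≤ s → ε₁ ≤ μ s) (h2 : ∀ s, 0 ≤ s → ε₂ ≤ μ s + 2 * s * μ' s) (a b : E) :
    min ε₁ ε₂ * ‖a - b‖ ^ 2 ≤ ⟪μ (‖a‖ ^ 2) • a - μ (‖b‖ ^ 2) • b, a - b⟫ := by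
  have hf := hasDerivAt_mul_inner_along_line hder b (a - b)
  have hgrowth := mul_sub_le_image_sub_of_le_deriv (fun t => (hf t).differentiableAt)
    (fun t => (hf t).deriv ▸ min_mul_norm_sq_le_of_coercive h1 h2 _ _) zero_le_one
  simpa [inner_sub_left, inner_smul_left] using hgrowth

end InnerProductSpace

noncomputable def Matrix.toEuclideanSpace {n : ℕ} (A : Matrix (Fin n) (Fin n) ℝ) :
    EuclideanSpace ℝ (Fin n × Fin n) :=
  WithLp.toLp 2 fun ij => A ij.1 ij.2

theorem Matrix.toEuclideanSpace_sub {n : ℕ} (A B : Matrix (Fin n) (Fin n) ℝ) :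
    (A - B).toEuclideanSpace = A.toEuclideanSpace - B.toEuclideanSpace := rfl

theorem Matrix.toEuclideanSpace_smul {n : ℕ} (c : ℝ) (A : Matrix (Fin n) (Fin n) ℝ) :
    (c • A).toEuclideanSpace = c • A.toEuclideanSpace := rfl

theorem ipF_eq_inner {n : ℕ} (A B : Matrix (Fin n) (Fin n) ℝ) :
    ipF A B = ⟪A.toEuclideanSpace, B.toEuclideanSpace⟫ := by
  simp [ipF, Matrix.toEuclideanSpace, PiLp.inner_apply, Fintype.sum_prod_type, mul_comm]

theorem nF_eq_norm {n : ℕ} (A : Matrix (Fin n) (Fin n) ℝ) : nF A = ‖A.toEuclideanSpace‖ := by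
  rw [nF, ipF_eq_inner, real_inner_self_eq_norm_sq, Real.sqrt_sq (norm_nonneg _)]

theorem matrix_strong_monotonicity_general (n : ℕ) (μ μ' : ℝ → ℝ)
    (ε₁ ε₂ : ℝ)
    (hder : ∀ s, 0 ≤ s → HasDerivAt μ (μ' s) s)
    (h1 : ∀ s, 0 ≤ s → ε₁ ≤ μ s)
    (h2 : ∀ s, 0 ≤ s → ε₂ ≤ μ s + 2 * s * μ' s)
    (A B : Matrix (Fin n) (Fin n) ℝ) :
    min ε₁ ε₂ * (nF (A - B)) ^ 2
      ≤ ipF (μ ((nF A) ^ 2) • A - μ ((nF B) ^ 2) • B) (A - B) := by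
  simpa only [ipF_eq_inner, nF_eq_norm, Matrix.toEuclideanSpace_sub,
    Matrix.toEuclideanSpace_smul] using
    min_mul_norm_sub_sq_le_inner hder h1 h2 A.toEuclideanSpace B.toEuclideanSpace

/-- Strong monotonicity of `A ↦ μ(|A|²)A`:
`⟨μ(|A|²)A - μ(|B|²)B, A - B⟩ ≥ ε |A - B|²` with `ε = min{ε₁, ε₂}`. -/
theorem matrix_strong_monotonicity (n : ℕ) (μ μ' : ℝ → ℝ)
    (ε₁ ε₂ : ℝ) (hε₁ : 0 < ε₁) (hε₂ : 0 < ε₂)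
    (hder : ∀ s, 0 ≤ s → HasDerivAt μ (μ' s) s) (hcont : Continuous μ')
    (h1 : ∀ s, 0 ≤ s → ε₁ ≤ μ s)
    (h2 : ∀ s, 0 ≤ s → ε₂ ≤ μ s + 2 * s * μ' s)
    (A B : Matrix (Fin n) (Fin n) ℝ) :
    min ε₁ ε₂ * (nF (A - B)) ^ 2
      ≤ ipF (μ ((nF A) ^ 2) • A - μ ((nF B) ^ 2) • B) (A - B) :=
  matrix_strong_monotonicity_general n μ μ' ε₁ ε₂ hder h1 h2 A B
end
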